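/- Let d ≥ 2 be even, k ≥ 1, and t_1 ≤ t_2 ≤ … ≤ t_k positive reals. Define s_1 = t_1 and s_i > 0 by s_{i−1}^2/2 + s_i^2/2 = t_i^2 for 2 ≤ i ≤ k (so s_i is well-defined since s_{i−1}^2/2 < t_{i−1}^2 ≤ t_i^2). Let K_i ⊂ s_i·S^{d/2−1} ⊂ ℝ^{d/2} be Ahlfors–David regular sets of Hausdorff dimension α ≤ ⌊d/2⌋ − 1, and let E ⊂ ℝ^d = ℝ^{d/2} × ℝ^{d/2} be the union of {(y/√2, 0) : y ∈ K_i for some i} and {(0, y/√2) : y ∈ K_i for some i}. Then any alternating tuple ((ỹ_1/√2, 0), (0, y_1/√2), (y_2/√2, 0), …) with ỹ_1 ∈ K_1 and y_i ∈ K_i forms a k-chain with consecutive distances exactly t_1, …, t_k, and hence dim_H(VS^k_t(E)) ≥ (k+1)α. -/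

import Mathlib

/-!
Two points `(a/√2, 0)` and `(0, b/√2)` are at distance `√((|a|² + |b|²)/2)`, which the
recursion for the radii `s_i` turns into `t_i`; this gives the chain property.

For the dimension bound, AD-regularity makes each `K_i` carry an `α`-Frostman probability measure
(`μ(B(x, r)) ≤ C r^α` at all centres and scales). The product of these measures on
`K_0 × K_0 × K_1 × ⋯ × K_{k-1}` is `(k+1)α`-Frostman and, having no atoms in any coordinate,
does not charge coincidences `p i = p j`; by the mass distribution principle the injective tuples
have Hausdorff dimension at least `(k+1)α`. Sending the `j`-th coordinate to the left factor for
even `j` and to the right one for odd `j` maps them into `VS^k_t(E)` by a `√2`-antilipschitz map.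
-/

open MeasureTheory ENNReal

/-- A set `K` is Ahlfors–David `α`-regular: it supports a Borel probability measure `μ`
with `c·r^α ≤ μ(B(x,r)) ≤ C·r^α` for all `x ∈ K` and `0 < r < diam K`. -/
def ADRegular {X : Type*} [MetricSpace X] [MeasurableSpace X] (α : ℝ) (K : Set X) : Prop :=
  ∃ (μ : Measure X) (c C : ℝ), 0 < c ∧ c ≤ C ∧ IsProbabilityMeasure μ ∧ μ Kᶜ = 0 ∧
    ∀ x ∈ K, ∀ r : ℝ, 0 < r → r < Metric.diam K →
      ENNReal.ofReal (c * r ^ α) ≤ μ (Metric.ball x r) ∧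
      μ (Metric.ball x r) ≤ ENNReal.ofReal (C * r ^ α)

/-- The vertex set `VS^k_t(E)` of non-degenerate `k`-chains with prescribed gaps `t`. -/
def VSChain {ι : Type*} [Fintype ι] (k : ℕ) (t : Fin k → ℝ)
    (E : Set (EuclideanSpace ℝ ι)) : Set (Fin (k + 1) → EuclideanSpace ℝ ι) :=
  {p | (∀ j, p j ∈ E) ∧ (∀ j : Fin k, dist (p j.castSucc) (p j.succ) = t j) ∧
    Function.Injective p}

/-- Embedding `y ↦ (y/√2, 0)` of `ℝ^{d/2}` into `ℝ^d = ℝ^{d/2} × ℝ^{d/2}`. -/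
noncomputable def embL (m : ℕ) (y : EuclideanSpace ℝ (Fin m)) :
    EuclideanSpace ℝ (Fin m ⊕ Fin m) :=
  (WithLp.equiv 2 (Fin m ⊕ Fin m → ℝ)).symm (Sum.elim (fun a => y a / Real.sqrt 2) 0)

/-- Embedding `y ↦ (0, y/√2)` of `ℝ^{d/2}` into `ℝ^d = ℝ^{d/2} × ℝ^{d/2}`. -/
noncomputable def embR (m : ℕ) (y : EuclideanSpace ℝ (Fin m)) :
    EuclideanSpace ℝ (Fin m ⊕ Fin m) :=
  (WithLp.equiv 2 (Fin m ⊕ Fin m → ℝ)).symm (Sum.elim 0 (fun a => y a / Real.sqrt 2))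

open Metric Filter Topology

@[simp] lemma embL_apply_inl (m : ℕ) (y : EuclideanSpace ℝ (Fin m)) (a : Fin m) :
    embL m y (Sum.inl a) = y a / √2 := rfl

@[simp] lemma embL_apply_inr (m : ℕ) (y : EuclideanSpace ℝ (Fin m)) (a : Fin m) :
    embL m y (Sum.inr a) = 0 := rfl

@[simp] lemma embR_apply_inl (m : ℕ) (y : EuclideanSpace ℝ (Fin m)) (a : Fin m) :
    embR m y (Sum.inl a) = 0 := rfl

@[simp] lemma embR_apply_inr (m : ℕ) (y : EuclideanSpace ℝ (Fin m)) (a : Fin m) :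
    embR m y (Sum.inr a) = y a / √2 := rfl

lemma dist_embL_embL (m : ℕ) (u v : EuclideanSpace ℝ (Fin m)) :
    dist (embL m u) (embL m v) = dist u v / √2 := by
  simp [EuclideanSpace.dist_eq, Fintype.sum_sum_type, Real.dist_eq, div_sub_div_same, div_pow,
    ← Finset.sum_div, Real.sqrt_div']

lemma dist_embR_embR (m : ℕ) (u v : EuclideanSpace ℝ (Fin m)) :
    dist (embR m u) (embR m v) = dist u v / √2 := by
  simp [EuclideanSpace.dist_eq, Fintype.sum_sum_type, Real.dist_eq, div_sub_div_same, div_pow,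
    ← Finset.sum_div, Real.sqrt_div']

lemma dist_embL_embR (m : ℕ) (u v : EuclideanSpace ℝ (Fin m)) :
    dist (embL m u) (embR m v) = √((‖u‖ ^ 2 + ‖v‖ ^ 2) / 2) := by
  simp [EuclideanSpace.dist_eq, Fintype.sum_sum_type, Real.dist_eq, div_pow,
    ← Finset.sum_div, ← add_div, EuclideanSpace.real_norm_sq_eq]

lemma embL_injective (m : ℕ) : Function.Injective (embL m) := fun u v h => by
  simpa [h, eq_comm (a := (0 : ℝ))] using dist_embL_embL m u v

lemma embR_injective (m : ℕ) : Function.Injective (embR m) := fun u v h => by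
  simpa [h, eq_comm (a := (0 : ℝ))] using dist_embR_embR m u v

lemma embL_ne_embR (m : ℕ) {u : EuclideanSpace ℝ (Fin m)} (hu : u ≠ 0)
    (v : EuclideanSpace ℝ (Fin m)) : embL m u ≠ embR m v := by
  rw [← dist_pos, dist_embL_embR]
  have : 0 < ‖u‖ := norm_pos_iff.mpr hu
  positivity

noncomputable def altEmb (m j : ℕ) :
    EuclideanSpace ℝ (Fin m) → EuclideanSpace ℝ (Fin m ⊕ Fin m) :=
  if Even j then embL m else embR m

lemma altEmb_succ (m n : ℕ) : altEmb m (n + 1) = if Even n then embR m else embL m := by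
  by_cases hn : Even n <;> simp [altEmb, Nat.even_add_one, hn]

lemma dist_altEmb_altEmb (m j : ℕ) (u v : EuclideanSpace ℝ (Fin m)) :
    dist (altEmb m j u) (altEmb m j v) = dist u v / √2 := by
  unfold altEmb; split_ifs
  exacts [dist_embL_embL m u v, dist_embR_embR m u v]

lemma dist_altEmb_altEmb_succ (m j : ℕ) (u v : EuclideanSpace ℝ (Fin m)) :
    dist (altEmb m j u) (altEmb m (j + 1) v) = √((‖u‖ ^ 2 + ‖v‖ ^ 2) / 2) := by
  rw [altEmb_succ, altEmb]
  split_ifs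
  · exact dist_embL_embR m u v
  · rw [dist_comm, dist_embL_embR, add_comm]

lemma eq_of_altEmb_eq_altEmb {m i j : ℕ} {u v : EuclideanSpace ℝ (Fin m)} (hu : u ≠ 0)
    (hv : v ≠ 0) (h : altEmb m i u = altEmb m j v) : u = v := by
  unfold altEmb at h
  split_ifs at h
  · exact embL_injective m h
  · exact absurd h (embL_ne_embR m hu v)
  · exact absurd h.symm (embL_ne_embR m hv u)
  · exact embR_injective m h

-- `i - 1` is truncated: for `i = 0` this reads `√(s 0 ^ 2) = t 0`.
lemma sqrt_mean_sq_radii_eq {k : ℕ} {t s : ℕ → ℝ} (htpos : ∀ i, i < k → 0 < t i)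
    (hs0 : s 0 = t 0)
    (hsrec : ∀ i, i + 1 < k → s i ^ 2 / 2 + s (i + 1) ^ 2 / 2 = t (i + 1) ^ 2)
    {i : ℕ} (hi : i < k) : √((s (i - 1) ^ 2 + s i ^ 2) / 2) = t i := by
  rw [Real.sqrt_eq_iff_eq_sq (by positivity) (htpos i hi).le]
  cases i with
  | zero => simp [hs0]
  | succ n => have := hsrec n hi; simp only [Nat.add_sub_cancel]; linarith

lemma dist_altEmb_altEmb_succ_eq {m k j : ℕ} {t s : ℕ → ℝ}
    (htpos : ∀ i, i < k → 0 < t i) (hs0 : s 0 = t 0)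
    (hsrec : ∀ i, i + 1 < k → s i ^ 2 / 2 + s (i + 1) ^ 2 / 2 = t (i + 1) ^ 2) (hj : j < k)
    {u v : EuclideanSpace ℝ (Fin m)} (hu : ‖u‖ = s (j - 1)) (hv : ‖v‖ = s j) :
    dist (altEmb m j u) (altEmb m (j + 1) v) = t j := by
  rw [dist_altEmb_altEmb_succ, hu, hv, sqrt_mean_sq_radii_eq htpos hs0 hsrec hj]

def IsFrostman {X : Type*} [PseudoMetricSpace X] [MeasurableSpace X] (μ : Measure X) (d : ℝ)
    (C : NNReal) : Prop :=
  ∀ x r, 0 < r → μ (ball x r) ≤ C * ENNReal.ofReal r ^ d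

namespace IsFrostman

section PseudoMetric

variable {X : Type*} [PseudoMetricSpace X] [MeasurableSpace X] {μ : Measure X} {d : ℝ}
  {C : NNReal}

lemma measure_closedBall_le (h : IsFrostman μ d C) (x : X) {r : ℝ} (hr : 0 ≤ r) :
    μ (closedBall x r) ≤ C * ENNReal.ofReal r ^ d := by
  have hlim : Tendsto (fun ρ => (C : ℝ≥0∞) * ENNReal.ofReal ρ ^ d) (𝓝[>] r)
      (𝓝 (C * ENNReal.ofReal r ^ d)) :=
    (ENNReal.Tendsto.const_mul ((ENNReal.continuous_rpow_const.comp
      ENNReal.continuous_ofReal).tendsto r) (Or.inr ENNReal.coe_ne_top)).mono_left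
      nhdsWithin_le_nhds
  refine ge_of_tendsto hlim ?_
  filter_upwards [self_mem_nhdsWithin] with ρ (hρ : r < ρ)
  exact (measure_mono (closedBall_subset_ball hρ)).trans (h x ρ (hr.trans_lt hρ))

lemma measure_le_ediam_rpow (h : IsFrostman μ d C) {s : Set X} (hs : ediam s ≠ ⊤) :
    μ s ≤ C * ediam s ^ d := by
  rcases s.eq_empty_or_nonempty with rfl | ⟨x, hx⟩
  · simp
  have hsub : s ⊆ closedBall x (diam s) := fun y hy =>
    dist_le_diam_of_mem (isBounded_iff_ediam_ne_top.2 hs) hy hx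
  calc μ s ≤ μ (closedBall x (diam s)) := measure_mono hsub
    _ ≤ C * ENNReal.ofReal (diam s) ^ d := h.measure_closedBall_le x diam_nonneg
    _ = C * ediam s ^ d := by rw [diam, ENNReal.ofReal_toReal hs]

lemma nullSingletonClass (h : IsFrostman μ d C) (hd : 0 < d) : NullSingletonClass μ where
  measure_singleton x := by
    refine measure_mono_null (Set.singleton_subset_iff.2 (mem_closedBall_self le_rfl)) ?_
    simpa [ENNReal.zero_rpow_of_pos hd] using h.measure_closedBall_le x le_rfl

end PseudoMetric

lemma pi {ι : Type*} [Fintype ι] {X : ι → Type*} [∀ i, PseudoMetricSpace (X i)]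
    [∀ i, MeasurableSpace (X i)] {μ : ∀ i, Measure (X i)} [∀ i, SigmaFinite (μ i)] {d : ℝ}
    {C : ι → NNReal} (h : ∀ i, IsFrostman (μ i) d (C i)) :
    IsFrostman (Measure.pi μ) (Fintype.card ι * d) (∏ i, C i) := by
  intro x r hr
  rw [ball_pi x hr, Measure.pi_pi]
  calc ∏ i, μ i (ball (x i) r) ≤ ∏ i, (C i * ENNReal.ofReal r ^ d) :=
        Finset.prod_le_prod' fun i _ => h i (x i) r hr
    _ = (∏ i, C i : NNReal) * ENNReal.ofReal r ^ (Fintype.card ι * d) := by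
        rw [Finset.prod_mul_distrib, Finset.prod_const, ENNReal.ofNNReal_finsetProd, mul_comm _ d,
          ENNReal.rpow_mul, ENNReal.rpow_natCast, Finset.card_univ]

lemma le_dimH {X : Type*} [MetricSpace X] [MeasurableSpace X] [BorelSpace X] {μ : Measure X}
    {d : ℝ} {C : NNReal} (h : IsFrostman μ d C) {s : Set X} (hs : μ s ≠ 0) :
    ENNReal.ofReal d ≤ dimH s := by
  rcases le_or_gt d 0 with hd | hd
  · simp [ENNReal.ofReal_eq_zero.2 hd]
  have hle : (C : ℝ≥0∞)⁻¹ • μ ≤ μH[d] := by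
    refine Measure.le_hausdorffMeasure d _ 1 one_pos fun t ht => ?_
    calc (C : ℝ≥0∞)⁻¹ * μ t ≤ (C : ℝ≥0∞)⁻¹ * (C * ediam t ^ d) := by
          gcongr; exact h.measure_le_ediam_rpow (ht.trans_lt ENNReal.one_lt_top).ne
      _ ≤ ediam t ^ d := by
          rw [← mul_assoc]; exact mul_le_of_le_one_left' (ENNReal.inv_mul_le_one _)
  have hpos : μH[d] s ≠ 0 := ne_bot_of_le_ne_bot (by simp [hs]) (hle s)
  simpa [ENNReal.ofReal, Real.coe_toNNReal _ hd.le] using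
    le_dimH_of_hausdorffMeasure_ne_zero (d := d.toNNReal) (by rwa [Real.coe_toNNReal _ hd.le])

end IsFrostman

lemma ADRegular.exists_isFrostman {X : Type*} [MetricSpace X] [MeasurableSpace X] {α : ℝ}
    {K : Set X} (hK : ADRegular α K) (hα : 0 ≤ α) (hdiam : 0 < diam K) :
    ∃ μ : Measure X, IsProbabilityMeasure μ ∧ μ Kᶜ = 0 ∧ ∃ C, IsFrostman μ α C := by
  obtain ⟨μ, _, C, _, _, hprob, hnull, hball⟩ := hK
  set D := max C (diam K ^ α)⁻¹
  -- above the diameter of `K` the bound `μ ≤ 1` takes over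
  have hK : ∀ x ∈ K, ∀ r, 0 < r → μ (ball x r) ≤ ENNReal.ofReal (D * r ^ α) := by
    intro x hx r hr
    rcases lt_or_ge r (diam K) with hlt | hge
    · refine (hball x hx r hr hlt).2.trans (ENNReal.ofReal_le_ofReal ?_)
      gcongr
      apply le_max_left
    · have hdα : 0 < diam K ^ α := Real.rpow_pos_of_pos hdiam α
      refine prob_le_one.trans (ENNReal.one_le_ofReal.2 ?_)
      calc (1 : ℝ) = (diam K ^ α)⁻¹ * diam K ^ α := (inv_mul_cancel₀ hdα.ne').symm
        _ ≤ D * r ^ α := by gcongr; apply le_max_right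
  refine ⟨μ, hprob, hnull, (D * 2 ^ α).toNNReal, fun x r hr => ?_⟩
  have hD : 0 ≤ D := (inv_nonneg.2 (Real.rpow_nonneg diam_nonneg α)).trans (le_max_right _ _)
  by_cases hx : ∃ y ∈ K, y ∈ ball x r
  · obtain ⟨y, hyK, hyx⟩ := hx
    have hsub : ball x r ⊆ ball y (2 * r) := fun z hz => by
      rw [mem_ball] at hz hyx ⊢
      linarith [dist_triangle z x y, dist_comm x y]
    calc μ (ball x r) ≤ ENNReal.ofReal (D * (2 * r) ^ α) :=
          (measure_mono hsub).trans (hK y hyK _ (by positivity))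
      _ = _ := by
          rw [Real.mul_rpow zero_le_two hr.le, ← mul_assoc, ENNReal.ofReal_mul (by positivity),
            ENNReal.ofReal_rpow_of_nonneg hr.le hα]
          rfl
  · push Not at hx
    simp [measure_mono_null (fun z hz hzK => hx z hzK hz) hnull]

lemma Measure.ae_pi_apply_ne_apply {n : ℕ} {X : Type*} [MeasurableSpace X] [MeasurableEq X]
    (μ : Fin (n + 1) → Measure X) [∀ i, SigmaFinite (μ i)] {i j : Fin (n + 1)} (hij : i ≠ j)
    [NullSingletonClass (μ j)] : ∀ᵐ p ∂Measure.pi μ, p i ≠ p j := by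
  obtain ⟨l, rfl⟩ := Fin.exists_succAbove_eq hij.symm
  have hmeas : MeasurableSet {z : X × (Fin n → X) | z.2 l = z.1} :=
    measurableSet_eq_fun (by fun_prop) (by fun_prop)
  -- split off coordinate `i`; each fibre is then a hyperplane `{q | q l = x}`
  have hset : {p : Fin (n + 1) → X | ¬p i ≠ p (i.succAbove l)} =
      MeasurableEquiv.piFinSuccAbove (fun _ => X) i ⁻¹' {z | z.2 l = z.1} := by
    ext p; simp [Fin.removeNth, eq_comm]
  rw [ae_iff, hset, (measurePreserving_piFinSuccAbove μ i).measure_preimage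
    hmeas.nullMeasurableSet, Measure.prod_apply hmeas]
  simp [Measure.pi_hyperplane]

lemma IsFrostman.le_dimH_setOf_injective {n : ℕ} {X : Type*} [MetricSpace X] [MeasurableSpace X]
    [BorelSpace X] [SecondCountableTopology X] {μ : Fin (n + 1) → Measure X}
    [∀ j, IsProbabilityMeasure (μ j)] {d : ℝ} (hd : 0 < d)
    {C : Fin (n + 1) → NNReal} (hμ : ∀ j, IsFrostman (μ j) d (C j))
    {K : Fin (n + 1) → Set X} (hK : ∀ j, μ j (K j)ᶜ = 0) :
    ENNReal.ofReal ((n + 1) * d) ≤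
      dimH {p : Fin (n + 1) → X | (∀ j, p j ∈ K j) ∧ Function.Injective p} := by
  have := fun j => (hμ j).nullSingletonClass hd
  have hmem : ∀ᵐ p ∂Measure.pi μ, (∀ j, p j ∈ K j) ∧ Function.Injective p := by
    have hmemK : ∀ j, ∀ᵐ p ∂Measure.pi μ, p j ∈ K j := fun j =>
      Measure.pi_eval_preimage_null μ (hK j)
    have hne : ∀ i j, i ≠ j → ∀ᵐ p ∂Measure.pi μ, p i ≠ p j := fun i j hij =>
      Measure.ae_pi_apply_ne_apply μ hij
    filter_upwards [ae_all_iff.2 hmemK, ae_all_iff.2 fun i => ae_all_iff.2 fun j =>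
      eventually_imp_distrib_left.2 (hne i j)] with p hpK hpne
    exact ⟨hpK, fun i j hij => by_contra fun h => hpne i j h hij⟩
  simpa using (IsFrostman.pi hμ).le_dimH (s := {p | (∀ j, p j ∈ K j) ∧ Function.Injective p})
    (by simp [measure_congr (ae_eq_univ.2 hmem)])

noncomputable def chainEmb (m n : ℕ) (p : Fin n → EuclideanSpace ℝ (Fin m)) :
    Fin n → EuclideanSpace ℝ (Fin m ⊕ Fin m) :=
  fun j => altEmb m j (p j)

lemma antilipschitzWith_chainEmb (m n : ℕ) :
    AntilipschitzWith (√2).toNNReal (chainEmb m n) := by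
  refine antilipschitzWith_iff_le_mul_dist.2 fun p q =>
    (dist_pi_le_iff (by positivity)).2 fun j => ?_
  have hj : dist (p j) (q j) = √2 * dist (chainEmb m n p j) (chainEmb m n q j) := by
    rw [chainEmb, chainEmb, dist_altEmb_altEmb]; field_simp
  rw [hj, Real.coe_toNNReal _ (Real.sqrt_nonneg 2)]
  gcongr
  exact dist_le_pi_dist _ _ j

lemma chainEmb_mem_VSChain {m k : ℕ} (hk : 1 ≤ k) {t s : ℕ → ℝ}
    (htpos : ∀ i, i < k → 0 < t i) (hs0 : s 0 = t 0)
    (hsrec : ∀ i, i + 1 < k → s i ^ 2 / 2 + s (i + 1) ^ 2 / 2 = t (i + 1) ^ 2)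
    (hspos : ∀ i, i < k → 0 < s i) {K : ℕ → Set (EuclideanSpace ℝ (Fin m))}
    (hKsub : ∀ i, i < k → K i ⊆ sphere 0 (s i))
    {p : Fin (k + 1) → EuclideanSpace ℝ (Fin m)} (hpK : ∀ j : Fin (k + 1), p j ∈ K (j - 1))
    (hp : Function.Injective p) :
    chainEmb m (k + 1) p ∈ VSChain k (fun j => t j)
      ((embL m '' ⋃ i ∈ Set.Iio k, K i) ∪ (embR m '' ⋃ i ∈ Set.Iio k, K i)) := by
  have hjk : ∀ j : Fin (k + 1), (j : ℕ) - 1 < k := fun j => by have := j.isLt; omega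
  have hnorm : ∀ j : Fin (k + 1), ‖p j‖ = s (j - 1) := fun j =>
    mem_sphere_zero_iff_norm.1 (hKsub _ (hjk j) (hpK j))
  refine ⟨fun j => ?_, fun j => ?_, fun i j hij => hp ?_⟩
  · have hU : p j ∈ ⋃ i ∈ Set.Iio k, K i := Set.mem_biUnion (hjk j) (hpK j)
    unfold chainEmb altEmb; split_ifs
    exacts [Or.inl ⟨p j, hU, rfl⟩, Or.inr ⟨p j, hU, rfl⟩]
  · refine dist_altEmb_altEmb_succ_eq htpos hs0 hsrec j.isLt (hnorm _) ?_
    simpa using hnorm j.succ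
  · have hne : ∀ j, p j ≠ 0 := fun j h0 =>
      (hspos _ (hjk j)).ne' (by rw [← hnorm, h0, norm_zero])
    exact eq_of_altEmb_eq_altEmb (hne i) (hne j) hij

theorem stmt_12_general (m k : ℕ) (hk : 1 ≤ k)
    (α : ℝ) (hα : 0 < α)
    (t s : ℕ → ℝ)
    (htpos : ∀ i, i < k → 0 < t i)
    (hs0 : s 0 = t 0) (hspos : ∀ i, i < k → 0 < s i)
    (hsrec : ∀ i, i + 1 < k → s i ^ 2 / 2 + s (i + 1) ^ 2 / 2 = t (i + 1) ^ 2)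
    (K : ℕ → Set (EuclideanSpace ℝ (Fin m)))
    (hKsub : ∀ i, i < k → K i ⊆ Metric.sphere 0 (s i))
    (hKAD : ∀ i, i < k → ADRegular α (K i))
    (hKdim : ∀ i, i < k → dimH (K i) = ENNReal.ofReal α)
    (E : Set (EuclideanSpace ℝ (Fin m ⊕ Fin m)))
    (hE : E = (embL m '' ⋃ i ∈ Set.Iio k, K i) ∪ (embR m '' ⋃ i ∈ Set.Iio k, K i)) :
    (∀ w ∈ K 0, ∀ y : ℕ → EuclideanSpace ℝ (Fin m), (∀ i, i < k → y i ∈ K i) →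
      ∀ z : ℕ → EuclideanSpace ℝ (Fin m ⊕ Fin m),
        z 0 = embL m w →
        (∀ n, z (n + 1) = if Even n then embR m (y n) else embL m (y n)) →
        ∀ j, j < k → dist (z j) (z (j + 1)) = t j) ∧
    ENNReal.ofReal (((k : ℝ) + 1) * α) ≤
      dimH (VSChain k (fun j : Fin k => t j) E) := by
  have hnorm : ∀ i, i < k → ∀ x ∈ K i, ‖x‖ = s i := fun i hi x hx =>
    mem_sphere_zero_iff_norm.1 (hKsub i hi hx)
  refine ⟨fun w hw y hy z hz0 hz j hj => ?_, ?_⟩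
  · have hzsucc : ∀ n, z (n + 1) = altEmb m (n + 1) (y n) := fun n => by
      rw [hz, altEmb_succ]; split_ifs <;> rfl
    obtain ⟨u, hu, hzj⟩ : ∃ u, ‖u‖ = s (j - 1) ∧ z j = altEmb m j u := by
      cases j with
      | zero => exact ⟨w, hnorm 0 hj w hw, hz0⟩
      | succ n => exact ⟨y n, hnorm n (by omega) _ (hy n (by omega)), hzsucc n⟩
    rw [hzj, hzsucc, dist_altEmb_altEmb_succ_eq htpos hs0 hsrec hj hu (hnorm j hj _ (hy j hj))]
  · have hdiam : ∀ i, i < k → 0 < diam (K i) := fun i hi => by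
      refine diam_pos (Set.not_subsingleton_iff.1 fun hsub => ?_)
        (isBounded_sphere.subset (hKsub i hi))
      simpa [dimH_subsingleton hsub, eq_comm, hα.not_ge] using hKdim i hi
    choose! μ hprob hnull C hC using fun i hi =>
      (hKAD i hi).exists_isFrostman hα.le (hdiam i hi)
    have hjk : ∀ j : Fin (k + 1), (j : ℕ) - 1 < k := fun j => by have := j.isLt; omega
    have := fun j : Fin (k + 1) => hprob _ (hjk j)
    -- vertices `0` and `1` both range over `K 0`, as `0 - 1 = 0` in `ℕ`
    calc ENNReal.ofReal ((k + 1) * α)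
        ≤ dimH {p : Fin (k + 1) → _ |
            (∀ j : Fin (k + 1), p j ∈ K (j - 1)) ∧ Function.Injective p} :=
          IsFrostman.le_dimH_setOf_injective hα (fun j => hC _ (hjk j)) fun j => hnull _ (hjk j)
      _ ≤ dimH (chainEmb m (k + 1) '' _) :=
          (antilipschitzWith_chainEmb m (k + 1)).le_dimH_image _
      _ ≤ _ := dimH_mono <| Set.image_subset_iff.2 fun p hp => hE ▸
          chainEmb_mem_VSChain hk htpos hs0 hsrec hspos hKsub hp.1 hp.2

/-- Orthogonal-spheres construction: with `d = 2m` even, `t₁ ≤ … ≤ t_k` positive,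
radii `s_i` defined by `s_1 = t_1` and `s_{i-1}²/2 + s_i²/2 = t_i²`, AD regular sets
`K_i ⊂ s_i·S^{d/2−1}` of Hausdorff dimension `α ≤ ⌊d/2⌋ − 1`, and `E` the union of the
two coordinate embeddings of the `K_i`, every alternating tuple forms a `k`-chain with
consecutive distances `t₁,…,t_k`, and `dim_H(VS^k_t(E)) ≥ (k+1)α`. -/
theorem stmt_12 (m k : ℕ) (hm : 1 ≤ m) (hk : 1 ≤ k)
    (α : ℝ) (hα : 0 < α) (hαm : α ≤ (m : ℝ) - 1)
    (t s : ℕ → ℝ)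
    (htpos : ∀ i, i < k → 0 < t i)
    (htmono : ∀ i j, i ≤ j → j < k → t i ≤ t j)
    (hs0 : s 0 = t 0) (hspos : ∀ i, i < k → 0 < s i)
    (hsrec : ∀ i, i + 1 < k → s i ^ 2 / 2 + s (i + 1) ^ 2 / 2 = t (i + 1) ^ 2)
    (K : ℕ → Set (EuclideanSpace ℝ (Fin m)))
    (hKsub : ∀ i, i < k → K i ⊆ Metric.sphere 0 (s i))
    (hKAD : ∀ i, i < k → ADRegular α (K i))
    (hKdim : ∀ i, i < k → dimH (K i) = ENNReal.ofReal α)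
    (E : Set (EuclideanSpace ℝ (Fin m ⊕ Fin m)))
    (hE : E = (embL m '' ⋃ i ∈ Set.Iio k, K i) ∪ (embR m '' ⋃ i ∈ Set.Iio k, K i)) :
    (∀ w ∈ K 0, ∀ y : ℕ → EuclideanSpace ℝ (Fin m), (∀ i, i < k → y i ∈ K i) →
      ∀ z : ℕ → EuclideanSpace ℝ (Fin m ⊕ Fin m),
        z 0 = embL m w →
        (∀ n, z (n + 1) = if Even n then embR m (y n) else embL m (y n)) →
        ∀ j, j < k → dist (z j) (z (j + 1)) = t j) ∧
    ENNReal.ofReal (((k : ℝ) + 1) * α) ≤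
      dimH (VSChain k (fun j : Fin k => t j) E) :=
  stmt_12_general m k hk α hα t s htpos hs0 hspos hsrec K hKsub hKAD hKdim E hE
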